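/- Let G = (V, E) be a graph with V = {v_1,…,v_n} and E = {e_1,…,e_m}. Construct the fair-division instance on graph H: goods are the n core goods (one per vertex of V), guard goods e_i^b for i ∈ [m] and b ∈ {1,2,3}, and goods a_1, a_2, a_3, x_1, x_2, x_3. Agents are, for each b ∈ {1,2,3}: F_b = {E_i^b : i ∈ [m]}, agents A_b and B_b, and C_b = {C_i^b : i ∈ {0,1,…,n+1}}. Valuations (additive 0/1): A_b values all core goods and a_b; B_b values only x_b; for the edge e_i = (v_p, v_q), agent E_i^b values {e_i^b, v_p, v_q, x_b, a_b} (identifying core goods with vertices); every agent of C_b values all core goods and a_b; all other values are 0. Edges of H: A_b is adjacent to every agent of F_b; C_0^b and B_b are each adjacent to every agent of F_b; and the agents of C_b induce a clique. Then G is properly 3-colorable (V can be partitioned into 3 independent sets) if and only if the constructed instance admits an allocation that is complete, non-wasteful, and locally proportional with respect to H. -/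

import Mathlib

namespace ThreeColoringReduction

/-- Agents of the reduced instance: for each `b ∈ {1,2,3}`, the agents
`E_i^b` (`i ∈ [m]`, the set `F_b`), `A_b`, `B_b`, and `C_i^b` for
`i ∈ {0, 1, …, n+1}`. -/
inductive Agent (n m : ℕ) where
  | E (b : Fin 3) (i : Fin m)
  | A (b : Fin 3)
  | B (b : Fin 3)
  | C (b : Fin 3) (i : Fin (n + 2))
deriving DecidableEq, Fintype

/-- Goods of the reduced instance: `n` core goods (one per vertex of `G`),
guard goods `e_i^b`, and the goods `a_1, a_2, a_3, x_1, x_2, x_3`. -/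
inductive Good (n m : ℕ) where
  | core (i : Fin n)
  | guard (b : Fin 3) (i : Fin m)
  | a (b : Fin 3)
  | x (b : Fin 3)
deriving DecidableEq

/-- Base relation for the social network `H`: `A_b`, `C_0^b` and `B_b` are each
adjacent to every agent of `F_b`, and the agents of `C_b` induce a clique. -/
def rel (n m : ℕ) : Agent n m → Agent n m → Prop
  | .A b, .E b' _ => b = b'
  | .B b, .E b' _ => b = b'
  | .C b i, .E b' _ => b = b' ∧ i = (0 : Fin (n + 2))
  | .C b _, .C b' _ => b = b'
  | _, _ => False

instance (n m : ℕ) : DecidableRel (rel n m) := fun a b => by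
  cases a <;> cases b <;> simp only [rel] <;> infer_instance

/-- The social network `H` of the reduced instance. -/
def H (n m : ℕ) : SimpleGraph (Agent n m) := SimpleGraph.fromRel (rel n m)

instance (n m : ℕ) : DecidableRel (H n m).Adj := fun a b =>
  decidable_of_iff _ (SimpleGraph.fromRel_adj (rel n m) a b).symm

/-- Additive 0/1 valuations: `A_b` values all core goods and `a_b`; `B_b`
values only `x_b`; for `e_i = (v_p, v_q)` (endpoints given by `ep i`), the
agent `E_i^b` values `{e_i^b, v_p, v_q, x_b, a_b}`; every agent of `C_b`
values all core goods and `a_b`; everything else is 0. -/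
def val (n m : ℕ) (ep : Fin m → Fin n × Fin n) : Agent n m → Good n m → ℕ
  | .A _, .core _ => 1
  | .A b, .a b' => if b = b' then 1 else 0
  | .B b, .x b' => if b = b' then 1 else 0
  | .E b i, .guard b' j => if b = b' ∧ i = j then 1 else 0
  | .E _ i, .core p => if p = (ep i).1 ∨ p = (ep i).2 then 1 else 0
  | .E b _, .x b' => if b = b' then 1 else 0
  | .E b _, .a b' => if b = b' then 1 else 0
  | .C _ _, .core _ => 1
  | .C b _, .a b' => if b = b' then 1 else 0
  | _, _ => 0

/-- Local proportionality of the allocation `π` at every agent, stated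
multiplicatively: `(d(i)+1) · ν_i(π(i)) ≥ ∑_{j ∈ N[i]} ν_i(π(j))`. -/
def LocallyProportional (n m : ℕ) (ep : Fin m → Fin n × Fin n)
    (π : Agent n m → Finset (Good n m)) : Prop :=
  ∀ i : Agent n m,
    ∑ j ∈ insert i ((H n m).neighborFinset i), ∑ g ∈ π j, val n m ep i g
      ≤ ((H n m).degree i + 1) * ∑ g ∈ π i, val n m ep i g

variable {n m : ℕ}

lemma adj_iff (u v : Agent n m) :
    (H n m).Adj u v ↔ u ≠ v ∧ (rel n m u v ∨ rel n m v u) :=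
  SimpleGraph.fromRel_adj (rel n m) u v

lemma nbhd_E (b : Fin 3) (i : Fin m) :
    (H n m).neighborFinset (.E b i) = {.A b, .B b, .C b 0} := by
  ext z
  simp only [SimpleGraph.mem_neighborFinset, adj_iff, Finset.mem_insert,
    Finset.mem_singleton]
  cases z <;> simp [rel]

lemma deg_E (b : Fin 3) (i : Fin m) : (H n m).degree (.E b i) = 3 := by
  rw [← SimpleGraph.card_neighborFinset_eq_degree, nbhd_E]
  simp

lemma mem_nbhd_B (b : Fin 3) (j : Fin m) :
    (Agent.E b j : Agent n m) ∈ (H n m).neighborFinset (.B b) := by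
  simp [adj_iff, rel]

lemma mem_nbhd_C0 (b : Fin 3) (j : Fin m) :
    (Agent.E b j : Agent n m) ∈ (H n m).neighborFinset (.C b 0) := by
  simp [adj_iff, rel]

lemma mem_nbhd_C (b : Fin 3) (j k : Fin (n+2)) (hjk : k ≠ j) :
    (Agent.C b k : Agent n m) ∈ (H n m).neighborFinset (.C b j) := by
  simp [adj_iff, rel, Ne.symm hjk, hjk]

-- adjacency characterization for neighbors of A b, B b, C b j (forward direction)
lemma adj_A (b : Fin 3) (z : Agent n m) (h : (H n m).Adj (.A b) z) :
    ∃ k, z = .E b k := by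
  rw [adj_iff] at h
  obtain ⟨-, h | h⟩ := h <;> cases z <;> simp_all [rel]

lemma adj_B (b : Fin 3) (z : Agent n m) (h : (H n m).Adj (.B b) z) :
    ∃ k, z = .E b k := by
  rw [adj_iff] at h
  obtain ⟨-, h | h⟩ := h <;> cases z <;> simp_all [rel]

lemma adj_C (b : Fin 3) (j : Fin (n+2)) (z : Agent n m) (h : (H n m).Adj (.C b j) z) :
    (∃ k, z = .E b k) ∨ (∃ k, z = .C b k) := by
  rw [adj_iff] at h
  obtain ⟨-, h | h⟩ := h <;> cases z <;> simp_all [rel]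
/-- The allocation built from a proper 3-coloring `f`. -/
def alloc (f : Fin n → Fin 3) : Agent n m → Finset (Good n m)
  | .E b i => {.guard b i}
  | .A b => insert (Good.a b) ((Finset.univ.filter fun v => f v = b).image Good.core)
  | .B b => {.x b}
  | .C _ _ => ∅

lemma mem_alloc_A {f : Fin n → Fin 3} {b : Fin 3} {g : Good n m} :
    g ∈ alloc f (.A b) ↔ g = .a b ∨ ∃ v, f v = b ∧ g = .core v := by
  simp [alloc, eq_comm]

lemma forward_lp (f : Fin n → Fin 3) (ep : Fin m → Fin n × Fin n)
    (hcol : ∀ i : Fin m, f (ep i).1 ≠ f (ep i).2) :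
    LocallyProportional n m ep (alloc f) := by
  intro i
  cases i with
  | A b =>
    rw [Finset.sum_insert (SimpleGraph.notMem_neighborFinset_self _ _)]
    have h0 : ∑ j ∈ (H n m).neighborFinset (.A b),
        ∑ g ∈ alloc f j, val n m ep (.A b) g = 0 := by
      apply Finset.sum_eq_zero
      intro z hz
      obtain ⟨k, rfl⟩ := adj_A b z (by simpa using hz)
      simp [alloc, val]
    rw [h0, add_zero]
    exact Nat.le_mul_of_pos_left _ (Nat.succ_pos _)
  | B b =>
    rw [Finset.sum_insert (SimpleGraph.notMem_neighborFinset_self _ _)]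
    have h0 : ∑ j ∈ (H n m).neighborFinset (.B b),
        ∑ g ∈ alloc f j, val n m ep (.B b) g = 0 := by
      apply Finset.sum_eq_zero
      intro z hz
      obtain ⟨k, rfl⟩ := adj_B b z (by simpa using hz)
      simp [alloc, val]
    rw [h0, add_zero]
    exact Nat.le_mul_of_pos_left _ (Nat.succ_pos _)
  | C b j =>
    have h0 : ∑ z ∈ insert (Agent.C b j) ((H n m).neighborFinset (.C b j)),
        ∑ g ∈ alloc f z, val n m ep (.C b j) g = 0 := by
      apply Finset.sum_eq_zero
      intro z hz
      rcases Finset.mem_insert.1 hz with rfl | hz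
      · simp [alloc]
      · rcases adj_C b j z (by simpa using hz) with ⟨k, rfl⟩ | ⟨k, rfl⟩ <;>
          simp [alloc, val]
    rw [h0]
    exact Nat.zero_le _
  | E b i =>
    have hE : insert (Agent.E b i) ((H n m).neighborFinset (.E b i))
        = {.E b i, .A b, .B b, .C b 0} := by rw [nbhd_E]
    rw [hE, deg_E]
    have hown : ∑ g ∈ alloc f (Agent.E b i : Agent n m), val n m ep (.E b i) g = 1 := by
      simp [alloc, val]
    have tB : ∑ g ∈ alloc f (Agent.B b : Agent n m), val n m ep (.E b i) g = 1 := by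
      simp [alloc, val]
    have tC : ∑ g ∈ alloc f (Agent.C b 0 : Agent n m), val n m ep (.E b i) g = 0 := by
      simp [alloc]
    have tA : ∑ g ∈ alloc f (Agent.A b : Agent n m), val n m ep (.E b i) g ≤ 2 := by
      show ∑ g ∈ insert (Good.a b) _, _ ≤ 2
      rw [Finset.sum_insert (by simp)]
      have h1 : val n m ep (Agent.E b i) (Good.a b) = 1 := by simp [val]
      rw [h1, Finset.sum_image (by intro x _ y _ h; injection h)]
      have h2 : ∑ v ∈ Finset.univ.filter fun v => f v = b,
          val n m ep (Agent.E b i) (Good.core v) ≤ 1 := by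
        have hval : ∀ v : Fin n, val n m ep (Agent.E b i) (Good.core v)
            = if v = (ep i).1 ∨ v = (ep i).2 then 1 else 0 := fun v => rfl
        simp only [hval]
        rw [Finset.sum_boole]
        have hsub : ((Finset.univ.filter fun v => f v = b).filter
            fun v => v = (ep i).1 ∨ v = (ep i).2)
            ⊆ (if f (ep i).1 = b then {(ep i).1} else {(ep i).2}) := by
          intro v hv
          simp only [Finset.mem_filter, Finset.mem_univ, true_and] at hv
          obtain ⟨hfv, h | h⟩ := hv <;> subst h <;> split <;> simp_all
          exact absurd ((by assumption : f (ep i).1 = b).trans hfv.symm) (hcol i)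
        calc _ ≤ _ := Nat.cast_le.2 (Finset.card_le_card hsub)
          _ ≤ 1 := by split <;> simp
      omega
    rw [Finset.sum_insert (by simp), Finset.sum_insert (by simp),
      Finset.sum_insert (by simp), Finset.sum_singleton, hown, tB, tC]
    omega
lemma forward (f : Fin n → Fin 3) (ep : Fin m → Fin n × Fin n)
    (hcol : ∀ i : Fin m, f (ep i).1 ≠ f (ep i).2) :
    (∀ a b : Agent n m, a ≠ b → Disjoint (alloc f a) (alloc f b)) ∧
    (∀ g : Good n m, ∃ a : Agent n m, g ∈ alloc f a) ∧
    (∀ a : Agent n m, ∀ g ∈ alloc f a, val n m ep a g = 1) ∧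
    LocallyProportional n m ep (alloc f) := by
  refine ⟨?_, ?_, ?_, ?_⟩
  · intro a b hab
    rw [Finset.disjoint_left]
    intro g hga hgb
    cases a <;> cases b <;>
      simp_all [alloc, Finset.mem_insert, eq_comm] <;> aesop
  · intro g
    cases g with
    | core v => exact ⟨.A (f v), by simp [mem_alloc_A]⟩
    | guard b i => exact ⟨.E b i, by simp [alloc]⟩
    | a b => exact ⟨.A b, by simp [mem_alloc_A]⟩
    | x b => exact ⟨.B b, by simp [alloc]⟩
  · intro a g hg
    cases a <;> simp_all [alloc, mem_alloc_A] <;> rcases hg with h | ⟨v, hv, rfl⟩ <;>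
      simp_all [val]
  · exact forward_lp f ep hcol
lemma backward (ep : Fin m → Fin n × Fin n) (G : SimpleGraph (Fin n))
    (hsurj : ∀ x y : Fin n, G.Adj x y → ∃ i : Fin m, ep i = (x, y) ∨ ep i = (y, x))
    (π : Agent n m → Finset (Good n m))
    (hdisj : ∀ a b : Agent n m, a ≠ b → Disjoint (π a) (π b))
    (hcomp : ∀ g : Good n m, ∃ a : Agent n m, g ∈ π a)
    (hnw : ∀ a : Agent n m, ∀ g ∈ π a, val n m ep a g = 1)
    (hlp : LocallyProportional n m ep π) :
    ∃ f : Fin n → Fin 3, ∀ x y : Fin n, G.Adj x y → f x ≠ f y := by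
  classical
  -- Step B : x_b ∈ π (B b)
  have hxB : ∀ b : Fin 3, (Good.x b : Good n m) ∈ π (.B b) := by
    intro b
    obtain ⟨a, ha⟩ := hcomp (.x b)
    have hv := hnw a _ ha
    cases a with
    | B b' => obtain rfl : b' = b := by simpa [val] using hv
              exact ha
    | A b' => simp [val] at hv
    | C b' k => simp [val] at hv
    | E b' j =>
      exfalso
      obtain rfl : b' = b := by simpa [val] using hv
      have hempty : π (.B b') = ∅ := by
        rw [Finset.eq_empty_iff_forall_notMem]
        intro g hg
        have hv2 := hnw _ _ hg
        have hgx : g = Good.x b' := by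
          cases g <;> simp [val] at hv2 <;> simp [hv2]
        subst hgx
        exact Finset.disjoint_left.1 (hdisj (.E b' j) (.B b') (by simp)) ha hg
      have hlpB := hlp (.B b')
      rw [hempty] at hlpB
      simp only [Finset.sum_empty, mul_zero, Nat.le_zero] at hlpB
      have h1 : (1:ℕ) ≤ ∑ g ∈ π (.E b' j), val n m ep (.B b') g := by
        calc (1:ℕ) = val n m ep (.B b') (.x b') := by simp [val]
        _ ≤ _ := Finset.single_le_sum (fun _ _ => Nat.zero_le _) ha
      have h2 : (∑ g ∈ π (.E b' j), val n m ep (.B b') g)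
          ≤ ∑ z ∈ insert (Agent.B b') ((H n m).neighborFinset (.B b')),
            ∑ g ∈ π z, val n m ep (.B b') g :=
        Finset.single_le_sum (f := fun z => ∑ g ∈ π z, val n m ep (.B b') g)
          (fun _ _ => Nat.zero_le _)
          (Finset.mem_insert_of_mem (mem_nbhd_B b' j))
      omega
  -- Step C : C agents hold nothing
  have hCempty : ∀ (b : Fin 3) (j : Fin (n+2)), π (.C b j) = ∅ := by
    intro b
    by_contra hne
    push_neg at hne
    obtain ⟨j0, hj0⟩ := hne
    have hbval : ∀ (j k : Fin (n+2)),
        ∑ g ∈ π (.C b k), val n m ep (.C b j) g = (π (.C b k)).card := by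
      intro j k
      rw [Finset.card_eq_sum_ones]
      refine Finset.sum_congr rfl fun g hg => ?_
      have hv := hnw _ _ hg
      cases g <;> simp_all [val]
    have hS : ∀ j : Fin (n+2), ∑ k : Fin (n+2), (π (.C b k)).card
        ≤ ((H n m).degree (.C b j) + 1) * (π (.C b j)).card := by
      intro j
      have hlpC := hlp (.C b j)
      rw [hbval j j] at hlpC
      refine le_trans ?_ hlpC
      have himg : (Finset.univ.image fun k => (Agent.C b k : Agent n m))
          ⊆ insert (.C b j) ((H n m).neighborFinset (.C b j)) := by
        intro z hz
        simp only [Finset.mem_image, Finset.mem_univ, true_and] at hz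
        obtain ⟨k, rfl⟩ := hz
        rcases eq_or_ne k j with rfl | hk
        · exact Finset.mem_insert_self _ _
        · exact Finset.mem_insert_of_mem (mem_nbhd_C b j k hk)
      calc ∑ k : Fin (n+2), (π (.C b k)).card
          = ∑ z ∈ Finset.univ.image (fun k => (Agent.C b k : Agent n m)),
            ∑ g ∈ π z, val n m ep (.C b j) g := by
            rw [Finset.sum_image (by intro x _ y _ h; injection h)]
            exact Finset.sum_congr rfl fun k _ => (hbval j k).symm
        _ ≤ _ := Finset.sum_le_sum_of_subset himg
    have hpos : ∀ j : Fin (n+2), 1 ≤ (π (.C b j)).card := by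
      intro j
      rcases Nat.eq_zero_or_pos (π (.C b j)).card with h0 | h
      · exfalso
        have hSj := hS j
        rw [h0, mul_zero, Nat.le_zero] at hSj
        have h1 : (π (.C b j0)).card ≤ ∑ k : Fin (n+2), (π (.C b k)).card :=
          Finset.single_le_sum (f := fun k => (π (.C b k)).card)
            (fun _ _ => Nat.zero_le _) (Finset.mem_univ j0)
        have h4 : 1 ≤ (π (.C b j0)).card :=
          Finset.card_pos.2 hj0
        omega
      · exact h
    have hge : (n+2 : ℕ) ≤ ∑ k : Fin (n+2), (π (.C b k)).card := by
      calc (n+2:ℕ) = ∑ _k : Fin (n+2), 1 := by simp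
      _ ≤ _ := Finset.sum_le_sum fun k _ => hpos k
    have hsub : ∀ k : Fin (n+2), π (.C b k)
        ⊆ insert (Good.a b) (Finset.univ.image Good.core) := by
      intro k g hg
      have hv := hnw _ _ hg
      cases g <;> simp_all [val]
    have hub : ∑ k : Fin (n+2), (π (.C b k)).card ≤ n + 1 := by
      rw [← Finset.card_biUnion (by
        intro x _ y hy hxy
        exact hdisj _ _ (by simpa using hxy))]
      calc _ ≤ (insert (Good.a b) (Finset.univ.image (Good.core (m := m)))).card :=
          Finset.card_le_card (Finset.biUnion_subset.2 fun k _ => hsub k)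
        _ ≤ (Finset.univ.image (Good.core (m := m))).card + 1 := Finset.card_insert_le _ _
        _ ≤ n + 1 := by
            have := Finset.card_image_le (s := (Finset.univ : Finset (Fin n))) (f := Good.core (m := m))
            simpa using Nat.add_le_add_right (le_trans this (by simp)) 1
    omega
  -- Step A : guards
  have hguard : ∀ (b : Fin 3) (i : Fin m), (Good.guard b i : Good n m) ∈ π (.E b i) := by
    intro b i
    obtain ⟨a, ha⟩ := hcomp (.guard b i)
    have hv := hnw a _ ha
    cases a with
    | E b' j =>
      obtain ⟨rfl, rfl⟩ : b' = b ∧ j = i := by simpa [val] using hv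
      exact ha
    | A b' => simp [val] at hv
    | B b' => simp [val] at hv
    | C b' k => simp [val] at hv
  -- Step D : E agents hold only their guard
  have hEonly : ∀ (b : Fin 3) (j : Fin m) (g : Good n m),
      g ∈ π (.E b j) → g = .guard b j := by
    intro b j g hg
    have hv := hnw _ _ hg
    have hC0 : val n m ep (.C b 0) g = 0 := by
      by_contra hval
      have h1 : 1 ≤ val n m ep (.C b 0) g := Nat.one_le_iff_ne_zero.2 hval
      have hlpC := hlp (.C b 0)
      rw [hCempty b 0] at hlpC
      simp only [Finset.sum_empty, mul_zero, Nat.le_zero] at hlpC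
      have h2 : (1:ℕ) ≤ ∑ g' ∈ π (.E b j), val n m ep (.C b 0) g' :=
        le_trans h1 (Finset.single_le_sum (fun _ _ => Nat.zero_le _) hg)
      have h3 : (∑ g' ∈ π (.E b j), val n m ep (.C b 0) g')
          ≤ ∑ z ∈ insert (Agent.C b 0) ((H n m).neighborFinset (.C b 0)),
            ∑ g' ∈ π z, val n m ep (.C b 0) g' :=
        Finset.single_le_sum (f := fun z => ∑ g' ∈ π z, val n m ep (.C b 0) g')
          (fun _ _ => Nat.zero_le _)
          (Finset.mem_insert_of_mem (mem_nbhd_C0 b j))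
      omega
    cases g with
    | core p => simp [val] at hC0
    | guard b' i =>
      obtain ⟨rfl, rfl⟩ : b = b' ∧ j = i := by simpa [val] using hv
      rfl
    | a b' =>
      obtain rfl : b = b' := by simpa [val] using hv
      simp [val] at hC0
    | x b' =>
      obtain rfl : b = b' := by simpa [val] using hv
      exact absurd hg (Finset.disjoint_left.1 (hdisj (.B b) (.E b j) (by simp)) (hxB b))
  -- Step E : cores go to A agents
  have hcoreA : ∀ v : Fin n, ∃ b, (Good.core v : Good n m) ∈ π (.A b) := by
    intro v
    obtain ⟨a, ha⟩ := hcomp (.core v)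
    cases a with
    | A b => exact ⟨b, ha⟩
    | B b => simpa [val] using hnw _ _ ha
    | E b j => exact absurd (hEonly b j _ ha) (by simp)
    | C b k => rw [hCempty] at ha; simp at ha
  -- Step F : a_b ∈ π (A b)
  have haA : ∀ b : Fin 3, (Good.a b : Good n m) ∈ π (.A b) := by
    intro b
    obtain ⟨a, ha⟩ := hcomp (.a b)
    have hv := hnw _ _ ha
    cases a with
    | A b' => obtain rfl : b' = b := by simpa [val] using hv
              exact ha
    | B b' => simp [val] at hv
    | E b' j => exact absurd (hEonly b' j _ ha) (by simp)
    | C b' k => rw [hCempty] at ha; simp at ha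
  -- conclusion
  choose f hf using hcoreA
  refine ⟨f, ?_⟩
  intro x y hadj hbeq
  obtain ⟨i, hi⟩ := hsurj x y hadj
  have hxy : x ≠ y := hadj.ne
  set b := f x with hbdef
  have hx : (Good.core x : Good n m) ∈ π (.A b) := hf x
  have hy : (Good.core y : Good n m) ∈ π (.A b) := by
    have := hf y; rwa [← hbeq] at this
  have hlpE := hlp (.E b i)
  rw [deg_E, nbhd_E, Finset.sum_insert (by simp), Finset.sum_insert (by simp),
    Finset.sum_insert (by simp), Finset.sum_singleton] at hlpE
  have hown_le : ∑ g ∈ π (.E b i), val n m ep (.E b i) g ≤ 1 := by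
    calc ∑ g ∈ π (.E b i), val n m ep (.E b i) g
        ≤ ∑ g ∈ ({Good.guard b i} : Finset (Good n m)), val n m ep (.E b i) g :=
        Finset.sum_le_sum_of_subset (fun g hg => by rw [hEonly b i g hg]; simp)
      _ = 1 := by simp [val]
  have hown_ge : 1 ≤ ∑ g ∈ π (.E b i), val n m ep (.E b i) g := by
    calc (1:ℕ) = val n m ep (.E b i) (.guard b i) := by simp [val]
    _ ≤ _ := Finset.single_le_sum (fun _ _ => Nat.zero_le _) (hguard b i)
  have tA : 3 ≤ ∑ g ∈ π (.A b), val n m ep (.E b i) g := by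
    have hsub : ({Good.core x, Good.core y, Good.a b} : Finset (Good n m)) ⊆ π (.A b) := by
      intro g hg
      rcases Finset.mem_insert.1 hg with rfl | hg
      · exact hx
      rcases Finset.mem_insert.1 hg with rfl | hg
      · exact hy
      rw [Finset.mem_singleton.1 hg]
      exact haA b
    refine le_trans ?_ (Finset.sum_le_sum_of_subset hsub)
    rw [Finset.sum_insert (by simp [hxy]), Finset.sum_insert (by simp),
      Finset.sum_singleton]
    have hvx : val n m ep (.E b i) (Good.core x) = 1 := by
      rcases hi with h | h <;> simp [val, h]
    have hvy : val n m ep (.E b i) (Good.core y) = 1 := by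
      rcases hi with h | h <;> simp [val, h]
    have hva : val n m ep (.E b i) (Good.a b) = 1 := by simp [val]
    omega
  have tB : 1 ≤ ∑ g ∈ π (.B b), val n m ep (.E b i) g := by
    calc (1:ℕ) = val n m ep (.E b i) (.x b) := by simp [val]
    _ ≤ _ := Finset.single_le_sum (fun _ _ => Nat.zero_le _) (hxB b)
  omega

/-- The graph `G` (edges enumerated by `ep`) is properly
3-colorable iff the constructed instance admits a complete, non-wasteful,
locally proportional allocation w.r.t. `H`. -/
theorem three_coloring_iff_lp_allocation
    (n m : ℕ) (G : SimpleGraph (Fin n)) (ep : Fin m → Fin n × Fin n)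
    (hep : ∀ i : Fin m, G.Adj (ep i).1 (ep i).2)
    (hsurj : ∀ x y : Fin n, G.Adj x y → ∃ i : Fin m, ep i = (x, y) ∨ ep i = (y, x))
    (hinj : ∀ i i' : Fin m,
      (ep i = ep i' ∨ ep i = ((ep i').2, (ep i').1)) → i = i') :
    (∃ f : Fin n → Fin 3, ∀ x y : Fin n, G.Adj x y → f x ≠ f y)
      ↔ (∃ π : Agent n m → Finset (Good n m),
          (∀ a b : Agent n m, a ≠ b → Disjoint (π a) (π b)) ∧
          (∀ g : Good n m, ∃ a : Agent n m, g ∈ π a) ∧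
          (∀ a : Agent n m, ∀ g ∈ π a, val n m ep a g = 1) ∧
          LocallyProportional n m ep π) := by
  constructor
  · rintro ⟨f, hf⟩
    exact ⟨alloc f, forward f ep (fun i => hf _ _ (hep i))⟩
  · rintro ⟨π, hdisj, hcomp, hnw, hlp⟩
    exact backward ep G hsurj π hdisj hcomp hnw hlp

end ThreeColoringReduction
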